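/- If n is a degree of a faithful transitive permutation representation of the group of the hypermap (3,3,3)_{(s,0)}, then 2n is a degree of the group of the map {6,3}_{(s,0)}. -/

import Mathlib

/-- `G` has a faithful transitive permutation representation of degree `n`. -/
def HasFTPR (G : Type*) [Group G] (n : ℕ) : Prop :=
  ∃ f : G →* Equiv.Perm (Fin n),
    Function.Injective f ∧ ∀ x y : Fin n, ∃ g : G, f g x = y

/-- Relations of the affine Coxeter group of type Ã₂ (three involutory generators,
all pairwise products of order 3), together with one extra relator. -/
def triRels (extra : FreeGroup (Fin 3)) : Set (FreeGroup (Fin 3)) :=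
  {r | ∃ i : Fin 3, r = FreeGroup.of i ^ 2} ∪
  {r | ∃ i j : Fin 3, i ≠ j ∧ r = (FreeGroup.of i * FreeGroup.of j) ^ 3} ∪
  {extra}

/-- The free-group word ρ0 ρ1 ρ2 ρ1 (the translation u). -/
def uWord : FreeGroup (Fin 3) :=
  FreeGroup.of 0 * FreeGroup.of 1 * FreeGroup.of 2 * FreeGroup.of 1

/-- The group of the toroidal hypermap (3,3,3)_{(s,0)}. -/
abbrev Hyp0 (s : ℕ) := PresentedGroup (triRels (uWord ^ s))

/-- The group of the toroidal hypermap (3,3,3)_{(s,s)}. -/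
abbrev HypSS (s : ℕ) :=
  PresentedGroup (triRels ((FreeGroup.of 0 * FreeGroup.of 1 * FreeGroup.of 2) ^ (2 * s)))

/-- Relations of the group of the toroidal map {6,3}_{(s,0)}: the Coxeter group [6,3]
(generators τ0, τ1, τ2 with τi² = (τ0τ1)⁶ = (τ1τ2)³ = (τ0τ2)² = 1) factored by the
normal closure of (τ0τ1τ2)^{2s}. -/
def mapRels (s : ℕ) : Set (FreeGroup (Fin 3)) :=
  {r | ∃ i : Fin 3, r = FreeGroup.of i ^ 2} ∪
  {(FreeGroup.of 0 * FreeGroup.of 1) ^ 6, (FreeGroup.of 1 * FreeGroup.of 2) ^ 3,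
   (FreeGroup.of 0 * FreeGroup.of 2) ^ 2,
   (FreeGroup.of 0 * FreeGroup.of 1 * FreeGroup.of 2) ^ (2 * s)}

/-- The group of the toroidal map {6,3}_{(s,0)}. -/
abbrev Map63 (s : ℕ) := PresentedGroup (mapRels s)

/-!
Let `φ : Hyp0 s → Map63 s` send `ρ₀ ↦ τ₀τ₁τ₀`, `ρ₁ ↦ τ₁`, `ρ₂ ↦ τ₂`. The assignment
`τ₀ ↦ (1, -1)`, `τ₁ ↦ ρ₁`, `τ₂ ↦ ρ₂` defines a homomorphism `ψ` into `Hyp0 s ⋊ ℤˣ`, where `-1`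
acts by the diagram automorphism swapping `ρ₀` and `ρ₁`; it has a left inverse and satisfies
`ψ ∘ φ = inl`. Hence `φ` is injective with image the kernel of `Map63 s → ℤˣ`, a subgroup of
index two. A faithful transitive action of degree `n` is the action on the cosets of a core-free
subgroup `H` of index `n`, and `φ H` has index `2n` and is core-free in `Map63 s`, because its
core pulls back to a normal subgroup of `Hyp0 s` contained in `H`.
-/

section PermutationDegree

variable {G K : Type*} [Group G] [Group K]

theorem HasFTPR.ne_zero [Nontrivial G] {n : ℕ} (h : HasFTPR G n) : n ≠ 0 := by
  rintro rfl
  obtain ⟨f, hf, -⟩ := h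
  obtain ⟨g, hg⟩ := exists_ne (1 : G)
  exact hg (hf (Subsingleton.elim (f g) (f 1)))

theorem hasFTPR_of_index_eq {H : Subgroup G} {n : ℕ} (hn : n ≠ 0) (hH : H.index = n)
    (hcore : H.normalCore = ⊥) : HasFTPR G n := by
  have : H.FiniteIndex := ⟨hH ▸ hn⟩
  let e : G ⧸ H ≃ Fin n := (Finite.equivFin _).trans (finCongr hH)
  refine ⟨e.permCongrHom.toMonoidHom.comp (MulAction.toPermHom G (G ⧸ H)), ?_, fun x y => ?_⟩
  · refine e.permCongrHom.injective.comp ((MonoidHom.ker_eq_bot_iff _).mp ?_)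
    rw [← Subgroup.normalCore_eq_ker, hcore]
  · obtain ⟨g, hg⟩ := MulAction.exists_smul_eq G (e.symm x) (e.symm y)
    exact ⟨g, by simp [Equiv.permCongr_apply, hg]⟩

theorem HasFTPR.exists_index_eq {n : ℕ} (hn : n ≠ 0) (h : HasFTPR G n) :
    ∃ H : Subgroup G, H.index = n ∧ H.normalCore = ⊥ := by
  obtain ⟨f, hf, htrans⟩ := h
  let x₀ : Fin n := ⟨0, Nat.pos_of_ne_zero hn⟩
  let _ : MulAction G (Fin n) := MulAction.compHom _ f
  have : MulAction.IsPretransitive G (Fin n) := ⟨fun x y => htrans x y⟩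
  refine ⟨MulAction.stabilizer G x₀, by simp [MulAction.index_stabilizer_of_transitive], ?_⟩
  rw [eq_bot_iff]
  intro g hg
  suffices f g = 1 from hf (this.trans (map_one f).symm)
  ext x : 1
  obtain ⟨h, rfl⟩ := htrans x₀ x
  have hconj : h⁻¹ * g * h ∈ MulAction.stabilizer G x₀ :=
    Subgroup.normalCore_le _ (by simpa using Subgroup.Normal.conj_mem inferInstance g hg h⁻¹)
  change f (h⁻¹ * g * h) x₀ = x₀ at hconj
  rw [map_mul, map_mul, Equiv.Perm.mul_apply, Equiv.Perm.mul_apply] at hconj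
  simpa using congrArg (f h) hconj

theorem Subgroup.normalCore_map_le_map_normalCore {f : G →* K} (hf : Function.Injective f)
    (H : Subgroup G) : (H.map f).normalCore ≤ H.normalCore.map f := by
  set N := (H.map f).normalCore
  have hN : N ≤ f.range := (Subgroup.normalCore_le _).trans (Subgroup.map_le_range f H)
  have hcomap : N.comap f ≤ H.normalCore :=
    Subgroup.normal_le_normalCore.mpr <| by
      rw [← Subgroup.comap_map_eq_self_of_injective hf H]
      exact Subgroup.comap_mono (Subgroup.normalCore_le _)
  rw [← Subgroup.map_comap_eq_self hN]
  exact Subgroup.map_mono hcomap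

theorem HasFTPR.of_injective [Nontrivial G] {f : G →* K} (hf : Function.Injective f)
    [f.range.FiniteIndex] {n : ℕ} (h : HasFTPR G n) : HasFTPR K (n * f.range.index) := by
  obtain ⟨H, hH, hcore⟩ := h.exists_index_eq h.ne_zero
  refine hasFTPR_of_index_eq (mul_ne_zero h.ne_zero Subgroup.FiniteIndex.index_ne_zero)
    (by rw [H.index_map_of_injective hf, hH]) ?_
  rw [eq_bot_iff, ← Subgroup.map_bot f, ← hcore]
  exact H.normalCore_map_le_map_normalCore hf

end PermutationDegree

theorem mul_swap_pow_eq_one {M : Type*} [Group M] {a b : M} {n : ℕ} (h : (a * b) ^ n = 1) :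
    (b * a) ^ n = 1 := by
  rw [show b * a = b * (a * b) * b⁻¹ by group, conj_pow, h, mul_one, mul_inv_cancel]

theorem mul_mul_eq_mul_mul_of_pow_three_eq_one {M : Type*} [Group M] {x y : M}
    (hx : x⁻¹ = x) (hy : y⁻¹ = y) (h : (x * y) ^ 3 = 1) : x * y * x = y * x * y := by
  rw [← mul_inv_eq_one]
  simp only [mul_inv_rev, hx, hy]
  rw [← h]
  simp only [pow_succ, pow_zero, one_mul, mul_assoc]

section UnitsInt

variable {M : Type*} [Monoid M]

def unitsIntLift (m : M) (hm : m * m = 1) : ℤˣ →* M where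
  toFun u := if u = 1 then 1 else m
  map_one' := if_pos rfl
  map_mul' u v := by
    rcases Int.units_eq_one_or u with rfl | rfl <;> rcases Int.units_eq_one_or v with rfl | rfl <;>
      simp [hm, show (-1 : ℤˣ) ≠ 1 by decide]

theorem unitsIntLift_neg_one (m : M) (hm : m * m = 1) : unitsIntLift m hm (-1) = m :=
  show (if (-1 : ℤˣ) = 1 then 1 else m) = m from if_neg (by decide)

end UnitsInt

namespace Hyp0

variable (s : ℕ)

theorem lift_mem_triRels_eq_one {M : Type*} [Group M] {x y z : M} (hx : x ^ 2 = 1)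
    (hy : y ^ 2 = 1) (hz : z ^ 2 = 1) (hxy : (x * y) ^ 3 = 1) (hxz : (x * z) ^ 3 = 1)
    (hyz : (y * z) ^ 3 = 1) (hu : (x * y * z * y) ^ s = 1) :
    ∀ r ∈ triRels (uWord ^ s), FreeGroup.lift ![x, y, z] r = 1 := by
  rintro r ((⟨i, rfl⟩ | ⟨i, j, hij, rfl⟩) | rfl)
  · fin_cases i <;> simpa
  · fin_cases i <;> fin_cases j <;>
      simp_all [mul_swap_pow_eq_one hxy, mul_swap_pow_eq_one hxz, mul_swap_pow_eq_one hyz]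
  · simpa [uWord] using hu

def ρ (i : Fin 3) : Hyp0 s := PresentedGroup.of i

theorem ρ_pow_two (i : Fin 3) : ρ s i ^ 2 = 1 :=
  PresentedGroup.one_of_mem (Or.inl (Or.inl ⟨i, rfl⟩))

theorem ρ_mul_ρ_pow_three {i j : Fin 3} (hij : i ≠ j) : (ρ s i * ρ s j) ^ 3 = 1 :=
  PresentedGroup.one_of_mem (Or.inl (Or.inr ⟨i, j, hij, rfl⟩))

theorem u_pow : (ρ s 0 * ρ s 1 * ρ s 2 * ρ s 1) ^ s = 1 :=
  PresentedGroup.one_of_mem (Or.inr rfl)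

theorem ρ_inv (i : Fin 3) : (ρ s i)⁻¹ = ρ s i :=
  inv_eq_of_mul_eq_one_right ((sq _).symm.trans (ρ_pow_two s i))

theorem ρ_mul_ρ_mul_ρ {i j : Fin 3} (hij : i ≠ j) :
    ρ s i * ρ s j * ρ s i = ρ s j * ρ s i * ρ s j :=
  mul_mul_eq_mul_mul_of_pow_three_eq_one (ρ_inv s i) (ρ_inv s j) (ρ_mul_ρ_pow_three s hij)

theorem ρ₀_ρ₂_ρ₁_ρ₂_pow : (ρ s 0 * ρ s 2 * ρ s 1 * ρ s 2) ^ s = 1 := by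
  have h := congrArg (ρ s 0 * ·) (ρ_mul_ρ_mul_ρ s (by decide : (2 : Fin 3) ≠ 1))
  simp only [mul_assoc] at h
  simpa only [mul_assoc, h] using u_pow s

/-- The image of `u` under the automorphism swapping `ρ₀` and `ρ₁` is conjugate to `u⁻¹`. -/
theorem ρ₁_ρ₀_ρ₂_ρ₀_pow : (ρ s 1 * ρ s 0 * ρ s 2 * ρ s 0) ^ s = 1 := by
  have hconj : ρ s 1 * ρ s 0 * ρ s 2 * ρ s 0 =
      ρ s 2 * (ρ s 0 * ρ s 1 * ρ s 2 * ρ s 1)⁻¹ * (ρ s 2)⁻¹ := by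
    calc ρ s 1 * ρ s 0 * ρ s 2 * ρ s 0 = ρ s 1 * (ρ s 0 * ρ s 2 * ρ s 0) := by group
      _ = ρ s 1 * ρ s 2 * ρ s 1 * ((ρ s 1)⁻¹ * ρ s 0 * ρ s 2) := by
        rw [ρ_mul_ρ_mul_ρ s (by decide : (0 : Fin 3) ≠ 2)]; group
      _ = ρ s 2 * ρ s 1 * ρ s 2 * (ρ s 1 * ρ s 0 * ρ s 2) := by
        rw [ρ_mul_ρ_mul_ρ s (by decide : (2 : Fin 3) ≠ 1), ρ_inv]
      _ = ρ s 2 * (ρ s 0 * ρ s 1 * ρ s 2 * ρ s 1)⁻¹ * (ρ s 2)⁻¹ := by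
        simp only [mul_inv_rev, ρ_inv]; group
  rw [hconj, conj_pow, inv_pow, u_pow, inv_one, mul_one, mul_inv_cancel]

def swap : Hyp0 s →* Hyp0 s :=
  PresentedGroup.toGroup (lift_mem_triRels_eq_one s (ρ_pow_two s 1) (ρ_pow_two s 0)
    (ρ_pow_two s 2) (ρ_mul_ρ_pow_three s (by decide)) (ρ_mul_ρ_pow_three s (by decide))
    (ρ_mul_ρ_pow_three s (by decide)) (ρ₁_ρ₀_ρ₂_ρ₀_pow s))

theorem swap_ρ_zero : swap s (ρ s 0) = ρ s 1 := PresentedGroup.toGroup.of _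
theorem swap_ρ_one : swap s (ρ s 1) = ρ s 0 := PresentedGroup.toGroup.of _
theorem swap_ρ_two : swap s (ρ s 2) = ρ s 2 := PresentedGroup.toGroup.of _

theorem swap_comp_swap : (swap s).comp (swap s) = MonoidHom.id _ := by
  refine PresentedGroup.ext fun i => ?_
  fin_cases i
  · exact (congrArg (swap s) (swap_ρ_zero s)).trans (swap_ρ_one s)
  · exact (congrArg (swap s) (swap_ρ_one s)).trans (swap_ρ_zero s)
  · exact (congrArg (swap s) (swap_ρ_two s)).trans (swap_ρ_two s)

def swapEquiv : Hyp0 s ≃* Hyp0 s :=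
  (swap s).toMulEquiv (swap s) (swap_comp_swap s) (swap_comp_swap s)

def swapAction : ℤˣ →* MulAut (Hyp0 s) :=
  unitsIntLift (swapEquiv s) (MulEquiv.ext fun x => DFunLike.congr_fun (swap_comp_swap s) x)

abbrev SwapSemidirect := Hyp0 s ⋊[swapAction s] ℤˣ

open SemidirectProduct

theorem swapAction_neg_one_apply (x : Hyp0 s) : swapAction s (-1) x = swap s x := by
  rw [swapAction, unitsIntLift_neg_one]
  rfl

theorem inr_neg_one_mul_inl (x : Hyp0 s) :
    (inr (-1) * inl x : SwapSemidirect s) = inl (swap s x) * inr (-1) := by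
  rw [← swapAction_neg_one_apply, inl_aut, map_inv, inv_mul_cancel_right]

theorem inl_mul_inr_neg_one_sq (x : Hyp0 s) :
    (inl x * inr (-1) : SwapSemidirect s) ^ 2 = inl (x * swap s x) := by
  rw [sq, mul_assoc, ← mul_assoc (inr (-1)), inr_neg_one_mul_inl, mul_assoc, ← map_mul inr,
    ← mul_assoc, ← map_mul inl]
  simp

def sign : Hyp0 s →* ℤˣ :=
  PresentedGroup.toGroup (lift_mem_triRels_eq_one s (x := -1) (y := -1) (z := -1)
    (by decide) (by decide) (by decide) (by decide) (by decide) (by decide) (by simp))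

theorem sign_ρ (i : Fin 3) : sign s (ρ s i) = -1 := by
  fin_cases i <;> exact PresentedGroup.toGroup.of _

instance : Nontrivial (Hyp0 s) :=
  ⟨⟨ρ s 0, 1, fun h => by simpa [sign_ρ] using congrArg (sign s) h⟩⟩

end Hyp0

namespace Map63

variable (s : ℕ)

theorem lift_mem_mapRels_eq_one {M : Type*} [Group M] {x y z : M} (hx : x ^ 2 = 1)
    (hy : y ^ 2 = 1) (hz : z ^ 2 = 1) (hxy : (x * y) ^ 6 = 1) (hyz : (y * z) ^ 3 = 1)
    (hxz : (x * z) ^ 2 = 1) (hxyz : (x * y * z) ^ (2 * s) = 1) :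
    ∀ r ∈ mapRels s, FreeGroup.lift ![x, y, z] r = 1 := by
  rintro r (⟨i, rfl⟩ | rfl | rfl | rfl | rfl)
  · fin_cases i <;> simpa
  all_goals simpa

def τ (i : Fin 3) : Map63 s := PresentedGroup.of i

theorem τ_pow_two (i : Fin 3) : τ s i ^ 2 = 1 :=
  PresentedGroup.one_of_mem (Or.inl ⟨i, rfl⟩)

theorem τ₀_τ₁_pow_six : (τ s 0 * τ s 1) ^ 6 = 1 :=
  PresentedGroup.one_of_mem (Or.inr (Or.inl rfl))

theorem τ₁_τ₂_pow_three : (τ s 1 * τ s 2) ^ 3 = 1 :=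
  PresentedGroup.one_of_mem (Or.inr (Or.inr (Or.inl rfl)))

theorem τ₀_τ₂_pow_two : (τ s 0 * τ s 2) ^ 2 = 1 :=
  PresentedGroup.one_of_mem (Or.inr (Or.inr (Or.inr (Or.inl rfl))))

theorem τ₀_τ₁_τ₂_pow : (τ s 0 * τ s 1 * τ s 2) ^ (2 * s) = 1 :=
  PresentedGroup.one_of_mem (Or.inr (Or.inr (Or.inr (Or.inr rfl))))

theorem τ_mul_self (i : Fin 3) : τ s i * τ s i = 1 :=
  (sq _).symm.trans (τ_pow_two s i)

theorem τ_inv (i : Fin 3) : (τ s i)⁻¹ = τ s i :=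
  inv_eq_of_mul_eq_one_right (τ_mul_self s i)

theorem τ_mul_τ_mul (i : Fin 3) (g : Map63 s) : τ s i * (τ s i * g) = g := by
  rw [← mul_assoc, τ_mul_self, one_mul]

theorem τ₂_mul_τ₀ : τ s 2 * τ s 0 = τ s 0 * τ s 2 :=
  calc τ s 2 * τ s 0 = (τ s 0 * τ s 2)⁻¹ := by rw [mul_inv_rev, τ_inv, τ_inv]
    _ = τ s 0 * τ s 2 := inv_eq_of_mul_eq_one_right ((sq _).symm.trans (τ₀_τ₂_pow_two s))

theorem τ₂_mul_τ₁_mul_τ₂ : τ s 2 * τ s 1 * τ s 2 = τ s 1 * τ s 2 * τ s 1 :=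
  mul_mul_eq_mul_mul_of_pow_three_eq_one (τ_inv s 2) (τ_inv s 1)
    (mul_swap_pow_eq_one (τ₁_τ₂_pow_three s))

theorem τ₀_mul_mul_τ₀ (g : Map63 s) : τ s 0 * g * τ s 0 = τ s 0 * g * (τ s 0)⁻¹ := by
  rw [τ_inv]

theorem τ₀_τ₁_τ₀_pow_two : (τ s 0 * τ s 1 * τ s 0) ^ 2 = 1 := by
  rw [τ₀_mul_mul_τ₀, conj_pow, τ_pow_two, mul_one, mul_inv_cancel]

theorem τ₀_τ₁_τ₀_τ₁_pow_three : (τ s 0 * τ s 1 * τ s 0 * τ s 1) ^ 3 = 1 := by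
  rw [← τ₀_τ₁_pow_six, show 6 = 2 * 3 from rfl, pow_mul, sq]
  group

theorem τ₀_τ₁_τ₀_τ₂_pow_three : (τ s 0 * τ s 1 * τ s 0 * τ s 2) ^ 3 = 1 := by
  rw [mul_assoc _ (τ s 0), ← τ₂_mul_τ₀,
    show τ s 0 * τ s 1 * (τ s 2 * τ s 0) = τ s 0 * (τ s 1 * τ s 2) * τ s 0 by group,
    τ₀_mul_mul_τ₀, conj_pow, τ₁_τ₂_pow_three, mul_one, mul_inv_cancel]

theorem τ₀_τ₁_τ₀_τ₁_τ₂_τ₁ :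
    τ s 0 * τ s 1 * τ s 0 * τ s 1 * τ s 2 * τ s 1 = (τ s 0 * τ s 1 * τ s 2) ^ 2 :=
  calc τ s 0 * τ s 1 * τ s 0 * τ s 1 * τ s 2 * τ s 1
      = τ s 0 * τ s 1 * τ s 0 * (τ s 2 * τ s 1 * τ s 2) := by
        rw [τ₂_mul_τ₁_mul_τ₂]; group
    _ = τ s 0 * τ s 1 * (τ s 2 * τ s 0) * (τ s 1 * τ s 2) := by rw [τ₂_mul_τ₀]; group
    _ = (τ s 0 * τ s 1 * τ s 2) ^ 2 := by rw [sq]; group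

end Map63

namespace Hyp0

variable (s : ℕ)

open Map63 SemidirectProduct

def toMap63 : Hyp0 s →* Map63 s :=
  PresentedGroup.toGroup (lift_mem_triRels_eq_one s (τ₀_τ₁_τ₀_pow_two s) (τ_pow_two s 1)
    (τ_pow_two s 2) (τ₀_τ₁_τ₀_τ₁_pow_three s) (τ₀_τ₁_τ₀_τ₂_pow_three s) (τ₁_τ₂_pow_three s)
    (by rw [τ₀_τ₁_τ₀_τ₁_τ₂_τ₁, ← pow_mul, τ₀_τ₁_τ₂_pow]))

theorem toMap63_ρ_zero : toMap63 s (ρ s 0) = τ s 0 * τ s 1 * τ s 0 := PresentedGroup.toGroup.of _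
theorem toMap63_ρ_one : toMap63 s (ρ s 1) = τ s 1 := PresentedGroup.toGroup.of _
theorem toMap63_ρ_two : toMap63 s (ρ s 2) = τ s 2 := PresentedGroup.toGroup.of _

end Hyp0

namespace Map63

variable (s : ℕ)

open Hyp0 SemidirectProduct

/-- `τ₀τ₁`, `τ₀τ₂` and `τ₀τ₁τ₂` map to elements `inl x * inr (-1)`, whose squares are
`inl (x * swap s x)`. -/
def toSwapSemidirect : Map63 s →* SwapSemidirect s :=
  PresentedGroup.toGroup (lift_mem_mapRels_eq_one s
    (x := inr (-1)) (y := inl (ρ s 1)) (z := inl (ρ s 2))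
    (by rw [← map_pow]; simp)
    (by rw [← map_pow, ρ_pow_two, map_one])
    (by rw [← map_pow, ρ_pow_two, map_one])
    (by rw [inr_neg_one_mul_inl, swap_ρ_one, show 6 = 2 * 3 from rfl, pow_mul,
      inl_mul_inr_neg_one_sq, swap_ρ_zero, ← map_pow, ρ_mul_ρ_pow_three s (by decide), map_one])
    (by rw [← map_mul, ← map_pow, ρ_mul_ρ_pow_three s (by decide), map_one])
    (by rw [inr_neg_one_mul_inl, swap_ρ_two, inl_mul_inr_neg_one_sq, swap_ρ_two, ← sq,
      ρ_pow_two, map_one])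
    (by rw [inr_neg_one_mul_inl, swap_ρ_one, mul_assoc, inr_neg_one_mul_inl, swap_ρ_two,
      ← mul_assoc, ← map_mul, pow_mul, inl_mul_inr_neg_one_sq, map_mul (swap s), swap_ρ_zero,
      swap_ρ_two, ← mul_assoc, ← map_pow, ρ₀_ρ₂_ρ₁_ρ₂_pow, map_one]))

theorem toSwapSemidirect_τ_zero : toSwapSemidirect s (τ s 0) = inr (-1) :=
  PresentedGroup.toGroup.of _
theorem toSwapSemidirect_τ_one : toSwapSemidirect s (τ s 1) = inl (ρ s 1) :=
  PresentedGroup.toGroup.of _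
theorem toSwapSemidirect_τ_two : toSwapSemidirect s (τ s 2) = inl (ρ s 2) :=
  PresentedGroup.toGroup.of _

end Map63

namespace Hyp0

variable (s : ℕ)

open Map63 SemidirectProduct

theorem toSwapSemidirect_comp_toMap63 : (toSwapSemidirect s).comp (toMap63 s) = inl := by
  refine PresentedGroup.ext fun i => ?_
  fin_cases i
  · show toSwapSemidirect s (toMap63 s (ρ s 0)) = inl (ρ s 0)
    rw [toMap63_ρ_zero, map_mul, map_mul, toSwapSemidirect_τ_zero, toSwapSemidirect_τ_one,
      inr_neg_one_mul_inl, swap_ρ_one, mul_assoc, ← map_mul inr]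
    simp
  · exact (congrArg _ (toMap63_ρ_one s)).trans (toSwapSemidirect_τ_one s)
  · exact (congrArg _ (toMap63_ρ_two s)).trans (toSwapSemidirect_τ_two s)

theorem toMap63_injective : Function.Injective (toMap63 s) := by
  have h := inl_injective (φ := swapAction s)
  rw [← toSwapSemidirect_comp_toMap63, MonoidHom.coe_comp] at h
  exact h.of_comp

def τ₀Hom : ℤˣ →* Map63 s := unitsIntLift (τ s 0) (τ_mul_self s 0)

theorem toMap63_comp_swap :
    (toMap63 s).comp (swap s) = (MulAut.conj (τ s 0)).toMonoidHom.comp (toMap63 s) := by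
  refine PresentedGroup.ext fun i => ?_
  fin_cases i
  · show toMap63 s (swap s (ρ s 0)) = τ s 0 * toMap63 s (ρ s 0) * (τ s 0)⁻¹
    rw [swap_ρ_zero, toMap63_ρ_one, toMap63_ρ_zero, τ_inv]
    simp only [mul_assoc, τ_mul_τ_mul, τ_mul_self, mul_one]
  · show toMap63 s (swap s (ρ s 1)) = τ s 0 * toMap63 s (ρ s 1) * (τ s 0)⁻¹
    rw [swap_ρ_one, toMap63_ρ_one, toMap63_ρ_zero, τ_inv]
  · show toMap63 s (swap s (ρ s 2)) = τ s 0 * toMap63 s (ρ s 2) * (τ s 0)⁻¹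
    rw [swap_ρ_two, toMap63_ρ_two, τ_inv, mul_assoc, τ₂_mul_τ₀, τ_mul_τ_mul]

def semidirectToMap63 : SwapSemidirect s →* Map63 s :=
  lift (toMap63 s) (τ₀Hom s) fun g => by
    rcases Int.units_eq_one_or g with rfl | rfl
    · ext x
      simp
    · rw [swapAction, unitsIntLift_neg_one, τ₀Hom, unitsIntLift_neg_one, ← toMap63_comp_swap]
      rfl

theorem semidirectToMap63_comp_toSwapSemidirect :
    (semidirectToMap63 s).comp (toSwapSemidirect s) = MonoidHom.id _ := by
  refine PresentedGroup.ext fun i => ?_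
  fin_cases i
  · show semidirectToMap63 s (toSwapSemidirect s (τ s 0)) = τ s 0
    rw [toSwapSemidirect_τ_zero, semidirectToMap63, lift_inr, τ₀Hom, unitsIntLift_neg_one]
  · show semidirectToMap63 s (toSwapSemidirect s (τ s 1)) = τ s 1
    rw [toSwapSemidirect_τ_one, semidirectToMap63, lift_inl, toMap63_ρ_one]
  · show semidirectToMap63 s (toSwapSemidirect s (τ s 2)) = τ s 2
    rw [toSwapSemidirect_τ_two, semidirectToMap63, lift_inl, toMap63_ρ_two]

theorem range_toMap63 : (toMap63 s).range = (rightHom.comp (toSwapSemidirect s)).ker := by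
  rw [← MonoidHom.comap_ker, ← range_inl_eq_ker_rightHom]
  ext k
  constructor
  · rintro ⟨x, rfl⟩
    exact ⟨x, (DFunLike.congr_fun (toSwapSemidirect_comp_toMap63 s) x).symm⟩
  · rintro ⟨x, hx⟩
    refine ⟨x, ?_⟩
    calc toMap63 s x = semidirectToMap63 s (inl x) := (lift_inl ..).symm
      _ = semidirectToMap63 s (toSwapSemidirect s k) := by rw [hx]
      _ = k := DFunLike.congr_fun (semidirectToMap63_comp_toSwapSemidirect s) k

theorem index_range_toMap63 : (toMap63 s).range.index = 2 := by
  rw [range_toMap63, Subgroup.index_ker, MonoidHom.range_eq_top.mpr]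
  · simp
  · intro u
    rcases Int.units_eq_one_or u with rfl | rfl
    · exact ⟨1, map_one _⟩
    · exact ⟨τ s 0, by simp [toSwapSemidirect_τ_zero]⟩

end Hyp0

theorem stmt18_general (s n : ℕ) (h : HasFTPR (Hyp0 s) n) :
    HasFTPR (Map63 s) (2 * n) := by
  have hindex := Hyp0.index_range_toMap63 s
  have : (Hyp0.toMap63 s).range.FiniteIndex := ⟨by omega⟩
  simpa [hindex, mul_comm] using h.of_injective (Hyp0.toMap63_injective s)

/-- If `n` is a degree of the group of the hypermap (3,3,3)_{(s,0)}, then `2n` is a degree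
of the group of the map {6,3}_{(s,0)}. -/
theorem stmt18 (s n : ℕ) (hs : 2 ≤ s) (h : HasFTPR (Hyp0 s) n) :
    HasFTPR (Map63 s) (2 * n) :=
  stmt18_general s n h
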